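/- Let κ be a nonempty partition and let α > 0 be real. Then (−α)^{|κ|−1} u_κ(α)/h_κ(α) = u_{κ′}(1/α)/h_{κ′}(1/α), where u_{κ′}(1/α) and h_{κ′}(1/α) denote u and h for the conjugate partition evaluated at the parameter 1/α; all denominators appearing are nonzero. -/

import Mathlib

/-- The arm length `a(s) = κ_i − j` of the cell `s = (i,j)` (zero-indexed) of a
Young diagram. -/
def armLen (μ : YoungDiagram) (c : ℕ × ℕ) : ℕ := μ.rowLen c.1 - (c.2 + 1)

/-- The leg length `l(s) = κ′_j − i` of the cell `s = (i,j)` (zero-indexed) of a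
Young diagram. -/
def legLen (μ : YoungDiagram) (c : ℕ × ℕ) : ℕ := μ.colLen c.2 - (c.1 + 1)

/-- The statistic `n(κ) = ∑_i (i−1)κ_i`, i.e. the sum over all cells of the
(zero-indexed) row index. -/
def nStat (μ : YoungDiagram) : ℕ := ∑ c ∈ μ.cells, c.1

/-- `h_κ(α) := ∏_{s∈κ} (α a(s) + l(s) + 1)`. -/
noncomputable def hAlpha (μ : YoungDiagram) (α : ℝ) : ℝ :=
  ∏ c ∈ μ.cells, (α * (armLen μ c : ℝ) + (legLen μ c : ℝ) + 1)

/-- `h′_κ(α) := ∏_{s∈κ} (α(a(s)+1) + l(s))`. -/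
noncomputable def h'Alpha (μ : YoungDiagram) (α : ℝ) : ℝ :=
  ∏ c ∈ μ.cells, (α * ((armLen μ c : ℝ) + 1) + (legLen μ c : ℝ))

/-- `u_κ(α) := |κ| α^{|κ|} (κ_1 − 1)! (∏_{i=2}^{ℓ(κ)} ∏_{j=0}^{κ_i−1} (j − (i−1)/α)) / h′_κ(α)`,
where `κ_i = rowLen (i−1)` and `ℓ(κ) = colLen 0`. -/
noncomputable def uAlpha (μ : YoungDiagram) (α : ℝ) : ℝ :=
  (μ.cells.card : ℝ) * α ^ μ.cells.card * (Nat.factorial (μ.rowLen 0 - 1) : ℝ) *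
    (∏ i ∈ Finset.Icc 2 (μ.colLen 0), ∏ j ∈ Finset.range (μ.rowLen (i - 1)),
      ((j : ℝ) - ((i - 1 : ℕ) : ℝ) / α)) / h'Alpha μ α

open Finset YoungDiagram

section Aux

/-- The factorial-times-double-product part of `uAlpha`. -/
noncomputable def Pf (μ : YoungDiagram) (α : ℝ) : ℝ :=
  (Nat.factorial (μ.rowLen 0 - 1) : ℝ) *
    ∏ i ∈ Finset.Icc 2 (μ.colLen 0), ∏ j ∈ Finset.range (μ.rowLen (i - 1)),
      ((j : ℝ) - ((i - 1 : ℕ) : ℝ) / α)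

lemma cells_decomp (μ : YoungDiagram) :
    μ.cells = (Finset.range (μ.colLen 0)).biUnion
      (fun i => {i} ×ˢ Finset.range (μ.rowLen i)) := by
  ext ⟨i, j⟩
  simp only [Finset.mem_biUnion, Finset.mem_range, Finset.mem_product,
    Finset.mem_singleton, YoungDiagram.mem_cells]
  constructor
  · intro h
    exact ⟨i, lt_of_lt_of_le (mem_iff_lt_colLen.mp h) (μ.colLen_anti 0 j (Nat.zero_le _)),
      rfl, mem_iff_lt_rowLen.mp h⟩
  · rintro ⟨a, _, rfl, hj⟩
    exact mem_iff_lt_rowLen.mpr hj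

lemma rows_disj (μ : YoungDiagram) :
    Set.PairwiseDisjoint (↑(Finset.range (μ.colLen 0)))
      (fun i => {i} ×ˢ Finset.range (μ.rowLen i)) := by
  intro a _ b _ hab
  simp only [Finset.disjoint_left, Finset.mem_product, Finset.mem_singleton]
  rintro ⟨x, y⟩ ⟨rfl, _⟩ ⟨rfl, _⟩
  exact hab rfl

lemma prod_cells {M : Type*} [CommMonoid M] (μ : YoungDiagram) (f : ℕ × ℕ → M) :
    ∏ c ∈ μ.cells, f c =
      ∏ i ∈ Finset.range (μ.colLen 0), ∏ j ∈ Finset.range (μ.rowLen i), f (i, j) := by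
  rw [cells_decomp, Finset.prod_biUnion (rows_disj μ)]
  exact Finset.prod_congr rfl fun i _ => by
    rw [Finset.singleton_product, Finset.prod_map]
    rfl

lemma card_cells (μ : YoungDiagram) :
    μ.cells.card = ∑ i ∈ Finset.range (μ.colLen 0), μ.rowLen i := by
  rw [cells_decomp, Finset.card_biUnion (rows_disj μ)]
  simp

lemma transpose_cells (μ : YoungDiagram) :
    μ.transpose.cells = μ.cells.map ⟨Prod.swap, Prod.swap_injective⟩ := by
  ext c
  simp only [Finset.mem_map, Function.Embedding.coeFn_mk, YoungDiagram.mem_cells,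
    YoungDiagram.mem_transpose]
  constructor
  · intro h; exact ⟨c.swap, h, Prod.swap_swap c⟩
  · rintro ⟨a, ha, rfl⟩; simpa using ha

lemma prod_transpose (μ : YoungDiagram) {M : Type*} [CommMonoid M] (f : ℕ × ℕ → M) :
    ∏ c ∈ μ.transpose.cells, f c = ∏ c ∈ μ.cells, f c.swap := by
  rw [transpose_cells, Finset.prod_map]; rfl

lemma card_transpose (μ : YoungDiagram) : μ.transpose.cells.card = μ.cells.card := by
  rw [transpose_cells, Finset.card_map]

lemma armLen_transpose (μ : YoungDiagram) (c : ℕ × ℕ) :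
    armLen μ.transpose c.swap = legLen μ c := by
  simp [armLen, legLen, YoungDiagram.rowLen_transpose]

lemma legLen_transpose (μ : YoungDiagram) (c : ℕ × ℕ) :
    legLen μ.transpose c.swap = armLen μ c := by
  simp [armLen, legLen, YoungDiagram.colLen_transpose]

lemma hA_transpose (μ : YoungDiagram) {α : ℝ} (hα : α ≠ 0) :
    α ^ μ.cells.card * hAlpha μ.transpose (1/α) = h'Alpha μ α := by
  rw [hAlpha, prod_transpose, ← Finset.prod_const, ← Finset.prod_mul_distrib, h'Alpha]
  refine Finset.prod_congr rfl fun c _ => ?_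
  rw [armLen_transpose, legLen_transpose]
  field_simp
  ring

lemma h'A_transpose (μ : YoungDiagram) {α : ℝ} (hα : α ≠ 0) :
    α ^ μ.cells.card * h'Alpha μ.transpose (1/α) = hAlpha μ α := by
  rw [h'Alpha, prod_transpose, ← Finset.prod_const, ← Finset.prod_mul_distrib, hAlpha]
  refine Finset.prod_congr rfl fun c _ => ?_
  rw [armLen_transpose, legLen_transpose]
  field_simp
  ring

lemma row0_prod0 (α : ℝ) (m : ℕ) :
    ∏ j ∈ Finset.range (m + 1), (if j = 0 then (1:ℝ) else α * j) =
      α ^ m * Nat.factorial m := by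
  induction m with
  | zero => simp
  | succ m ih =>
      rw [Finset.prod_range_succ, ih, if_neg (Nat.succ_ne_zero m)]
      push_cast [Nat.factorial_succ]
      ring

lemma row0_prod (α : ℝ) {m : ℕ} (hm : 1 ≤ m) :
    ∏ j ∈ Finset.range m, (if j = 0 then (1:ℝ) else α * j) =
      α ^ (m - 1) * Nat.factorial (m - 1) := by
  obtain ⟨k, rfl⟩ : ∃ k, m = k + 1 := ⟨m - 1, by omega⟩
  simpa using row0_prod0 α k

lemma rowi_prod {α : ℝ} (hα : α ≠ 0) (i m : ℕ) :
    ∏ j ∈ Finset.range m, (α * (j:ℝ) - i) =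
      α ^ m * ∏ j ∈ Finset.range m, ((j:ℝ) - (i:ℝ) / α) := by
  have h1 : α ^ m = ∏ _j ∈ Finset.range m, α := by simp
  rw [h1, ← Finset.prod_mul_distrib]
  refine Finset.prod_congr rfl fun j _ => ?_
  field_simp

lemma reindex (ℓ : ℕ) (g : ℕ → ℝ) :
    ∏ i ∈ Finset.Icc 2 ℓ, g (i - 1) = ∏ i ∈ Finset.Ico 1 ℓ, g i := by
  refine Finset.prod_nbij' (fun i => i - 1) (fun i => i + 1) ?_ ?_ ?_ ?_ ?_
  · intro a ha; simp only [Finset.mem_Icc] at ha; simp only [Finset.mem_Ico]; omega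
  · intro a ha; simp only [Finset.mem_Ico] at ha; simp only [Finset.mem_Icc]; omega
  · intro a ha; simp only [Finset.mem_Icc] at ha; show a - 1 + 1 = a; omega
  · intro a ha; simp only [Finset.mem_Ico] at ha; show a + 1 - 1 = a; omega
  · intro a _; rfl

lemma keyR (μ : YoungDiagram) (hμ : μ.cells.Nonempty) {α : ℝ} (hα : α ≠ 0) :
    (∏ c ∈ μ.cells, (if c = (0,0) then (1:ℝ) else α * c.2 - c.1)) =
      α ^ (μ.cells.card - 1) * Pf μ α := by
  obtain ⟨c₀, hc₀⟩ := hμ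
  have h00 : (0,0) ∈ μ := μ.up_left_mem (Nat.zero_le _) (Nat.zero_le _) (by simpa using hc₀)
  have hℓ : 1 ≤ μ.colLen 0 := mem_iff_lt_colLen.mp h00
  have hκ : 1 ≤ μ.rowLen 0 := mem_iff_lt_rowLen.mp h00
  rw [prod_cells]
  have hsplit : Finset.range (μ.colLen 0) = insert 0 (Finset.Ico 1 (μ.colLen 0)) := by
    ext x; simp only [Finset.mem_range, Finset.mem_insert, Finset.mem_Ico]; omega
  rw [hsplit, Finset.prod_insert (by simp), Pf]
  have e0 : ∏ j ∈ Finset.range (μ.rowLen 0),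
      (if ((0:ℕ), j) = ((0:ℕ), (0:ℕ)) then (1:ℝ) else α * (j:ℝ) - ((0:ℕ):ℝ)) =
      α ^ (μ.rowLen 0 - 1) * Nat.factorial (μ.rowLen 0 - 1) := by
    rw [← row0_prod α hκ]
    refine Finset.prod_congr rfl fun j _ => ?_
    by_cases h : j = 0 <;> simp [h]
  have e1 : ∀ i ∈ Finset.Ico 1 (μ.colLen 0),
      (∏ j ∈ Finset.range (μ.rowLen i),
        (if ((i:ℕ), j) = ((0:ℕ),(0:ℕ)) then (1:ℝ) else α * (j:ℝ) - (i:ℝ))) =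
      α ^ (μ.rowLen i) * ∏ j ∈ Finset.range (μ.rowLen i), ((j:ℝ) - (i:ℝ)/α) := by
    intro i hi
    simp only [Finset.mem_Ico] at hi
    rw [← rowi_prod hα]
    refine Finset.prod_congr rfl fun j _ => ?_
    rw [if_neg (by simp only [Prod.mk.injEq, not_and]; omega)]
  rw [e0, Finset.prod_congr rfl e1, Finset.prod_mul_distrib,
    Finset.prod_pow_eq_pow_sum]
  have e2 : ∏ i ∈ Finset.Icc 2 (μ.colLen 0), ∏ j ∈ Finset.range (μ.rowLen (i-1)),
      ((j:ℝ) - ((i-1:ℕ):ℝ)/α) =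
      ∏ i ∈ Finset.Ico 1 (μ.colLen 0), ∏ j ∈ Finset.range (μ.rowLen i),
      ((j:ℝ) - (i:ℝ)/α) :=
    reindex (μ.colLen 0) (fun k => ∏ j ∈ Finset.range (μ.rowLen k), ((j:ℝ) - (k:ℝ)/α))
  rw [e2]
  have hcard : μ.cells.card = μ.rowLen 0 + ∑ i ∈ Finset.Ico 1 (μ.colLen 0), μ.rowLen i := by
    rw [card_cells, hsplit, Finset.sum_insert (by simp)]
  have hexp : μ.cells.card - 1 =
      (μ.rowLen 0 - 1) + ∑ i ∈ Finset.Ico 1 (μ.colLen 0), μ.rowLen i := by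
    omega
  rw [hexp, pow_add]
  ring

lemma prod_ite_erase {X : Type*} [DecidableEq X] (s : Finset X) (a : X) (h : a ∈ s)
    (f : X → ℝ) :
    ∏ c ∈ s, (if c = a then 1 else f c) = ∏ c ∈ s.erase a, f c := by
  rw [← Finset.mul_prod_erase s _ h, if_pos rfl, one_mul]
  exact Finset.prod_congr rfl fun c hc => if_neg (Finset.ne_of_mem_erase hc)

lemma keyD (μ : YoungDiagram) (hμ : μ.cells.Nonempty) {α : ℝ} (hα : α ≠ 0) :
    Pf μ.transpose (1/α) = (-α) ^ (μ.cells.card - 1) * Pf μ α := by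
  set m := μ.cells.card - 1 with hm
  have hα' : (1:ℝ)/α ≠ 0 := by simp [hα]
  have h00 : ((0:ℕ),(0:ℕ)) ∈ μ.cells := by
    obtain ⟨c₀, hc₀⟩ := hμ
    rw [YoungDiagram.mem_cells] at hc₀ ⊢
    exact μ.up_left_mem (Nat.zero_le _) (Nat.zero_le _) hc₀
  have h00' : ((0:ℕ),(0:ℕ)) ∈ μ.transpose.cells := by
    rw [YoungDiagram.mem_cells, YoungDiagram.mem_transpose]
    simpa using (YoungDiagram.mem_cells _).mp h00
  have hμ' : μ.transpose.cells.Nonempty := ⟨_, h00'⟩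
  have E0 := keyR μ.transpose hμ' hα'
  rw [card_transpose] at E0
  rw [prod_transpose] at E0
  have emid : ∏ c ∈ μ.cells, (if c.swap = ((0:ℕ),(0:ℕ)) then (1:ℝ)
        else 1/α * (c.swap.2:ℝ) - (c.swap.1:ℝ)) =
      (-(1/α)) ^ m * (α ^ m * Pf μ α) := by
    have e1 : ∀ c ∈ μ.cells, (if c.swap = ((0:ℕ),(0:ℕ)) then (1:ℝ)
        else 1/α * (c.swap.2:ℝ) - (c.swap.1:ℝ)) =
        (if c = ((0:ℕ),(0:ℕ)) then (1:ℝ) else (-(1/α)) * (α * (c.2:ℝ) - (c.1:ℝ))) := by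
      intro c _
      have : c.swap = ((0:ℕ),(0:ℕ)) ↔ c = ((0:ℕ),(0:ℕ)) := by
        cases c; simp [Prod.swap, and_comm]
      rw [if_congr this rfl rfl]
      by_cases h : c = ((0:ℕ),(0:ℕ))
      · simp [h]
      · rw [if_neg h, if_neg h]; field_simp
        rw [Prod.snd_swap, Prod.fst_swap]; ring
    have E2 := keyR μ hμ hα
    rw [prod_ite_erase _ _ h00] at E2
    rw [Finset.prod_congr rfl e1, prod_ite_erase _ _ h00, Finset.prod_mul_distrib,
      Finset.prod_const, Finset.card_erase_of_mem h00, E2, hm]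
  rw [emid, ← hm] at E0
  have hc : α ^ m * (1/α) ^ m = 1 := by rw [div_pow, one_pow]; field_simp
  calc Pf μ.transpose (1/α)
      = α ^ m * ((1/α) ^ m * Pf μ.transpose (1/α)) := by
        rw [← mul_assoc, hc, one_mul]
    _ = α ^ m * ((-(1/α)) ^ m * (α ^ m * Pf μ α)) := by rw [E0]
    _ = (-α) ^ m * Pf μ α := by
        rw [neg_pow, neg_pow (α)]
        linear_combination ((-1:ℝ)^m * (α^m * Pf μ α)) * hc

lemma uAlpha_eq (μ : YoungDiagram) (α : ℝ) :
    uAlpha μ α = (μ.cells.card : ℝ) * α ^ μ.cells.card * Pf μ α / h'Alpha μ α := by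
  rw [uAlpha, Pf, mul_assoc]

lemma hAlpha_pos (μ : YoungDiagram) {α : ℝ} (hα : 0 < α) : 0 < hAlpha μ α := by
  refine Finset.prod_pos fun c _ => ?_
  positivity

lemma h'Alpha_pos (μ : YoungDiagram) {α : ℝ} (hα : 0 < α) : 0 < h'Alpha μ α := by
  refine Finset.prod_pos fun c _ => ?_
  have : (0:ℝ) ≤ (armLen μ c : ℝ) := Nat.cast_nonneg _
  have : (0:ℝ) ≤ (legLen μ c : ℝ) := Nat.cast_nonneg _
  nlinarith

end Aux

/-- For a nonempty partition `κ` and real `α > 0`: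
`(−α)^{|κ|−1} u_κ(α)/h_κ(α) = u_{κ′}(1/α)/h_{κ′}(1/α)`. -/
theorem u_over_h_alpha_conjugate (μ : YoungDiagram) (hμ : μ.cells.Nonempty)
    (α : ℝ) (hα : 0 < α) :
    (-α) ^ (μ.cells.card - 1) * uAlpha μ α / hAlpha μ α =
      uAlpha μ.transpose (1 / α) / hAlpha μ.transpose (1 / α) := by
  have hα0 : α ≠ 0 := hα.ne'
  have hn : (0:ℝ) < α ^ μ.cells.card := by positivity
  have eh : hAlpha μ.transpose (1/α) = h'Alpha μ α / α ^ μ.cells.card := by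
    rw [← hA_transpose μ hα0]; field_simp
  have eh' : h'Alpha μ.transpose (1/α) = hAlpha μ α / α ^ μ.cells.card := by
    rw [← h'A_transpose μ hα0]; field_simp
  have hpos := hAlpha_pos μ hα
  have h'pos := h'Alpha_pos μ hα
  rw [uAlpha_eq, uAlpha_eq, card_transpose, keyD μ hμ hα0, eh, eh']
  have h1 : hAlpha μ α ≠ 0 := hpos.ne'
  have h2 : h'Alpha μ α ≠ 0 := h'pos.ne'
  field_simp
  have h3 : α ^ μ.cells.card * α⁻¹ ^ μ.cells.card = 1 := by
    rw [← mul_pow, mul_inv_cancel₀ hα0, one_pow]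
  linear_combination (-(α ^ (μ.cells.card - 1) * Pf μ α * (-1) ^ (μ.cells.card - 1))) * h3
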